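/- Generalized Havel–Hakimi step with arbitrary hub: Let (d_1,...,d_n) be a degree sequence, let i be any index with d_i = Δ > 0, and suppose the sequence is graphical. Then after connecting vertex i to the Δ vertices (other than i) of largest remaining degree and decrementing their degrees, the resulting sequence is graphical; conversely if the resulting sequence is graphical then so was the original. -/

import Mathlib

/-!
Realize `d` by a graph `G`. A 2-switch, which trades the edges `ik`, `jl` for the non-edges `ij`,
`kl`, preserves every degree. While the neighbourhood of the hub `i` differs from `S`, pick
`j ∈ S` not adjacent to `i` and `k ∉ S` adjacent to it; then `deg k ≤ deg j`, and since `k` is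
adjacent to `i` while `j` is not, some neighbour `l` of `j` is not adjacent to `k`. Switching
on `i, j, k, l` shrinks `S \ N(i)`, so eventually `N(i) = S`, and deleting the edges at `i`
realizes the reduced sequence. Conversely, `i` is isolated in a realization of the reduced
sequence, and joining it to `S` realizes `d`.
-/

/-- A sequence of integers is graphical if some finite simple graph realizes
it as its degree sequence (in particular all entries are nonnegative). -/
def GraphicalZ {m : ℕ} (d : Fin m → ℤ) : Prop :=
  ∃ G : SimpleGraph (Fin m), ∀ v, ((G.neighborSet v).ncard : ℤ) = d v

namespace SimpleGraph

variable {V : Type*} (G : SimpleGraph V)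

def twoSwitch (i j k l : V) : SimpleGraph V :=
  fromEdgeSet ((G.edgeSet \ {s(i, k), s(j, l)}) ∪ {s(i, j), s(k, l)})

lemma twoSwitch_swap (i j k l : V) : G.twoSwitch i j k l = G.twoSwitch j i l k := by
  rw [twoSwitch, twoSwitch, Sym2.eq_swap (a := j) (b := i), Sym2.eq_swap (a := l) (b := k),
    Set.pair_comm s(j, l)]

lemma twoSwitch_rotate (i j k l : V) : G.twoSwitch i j k l = G.twoSwitch k l i j := by
  rw [twoSwitch, twoSwitch, Sym2.eq_swap (a := k) (b := i), Sym2.eq_swap (a := l) (b := j),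
    Set.pair_comm s(k, l)]

variable {G} {i j k l : V}

lemma neighborSet_twoSwitch_left (hij : i ≠ j) (hik : i ≠ k) (hil : i ≠ l) :
    (G.twoSwitch i j k l).neighborSet i = insert j (G.neighborSet i \ {k}) := by
  ext w
  simp only [twoSwitch, mem_neighborSet, fromEdgeSet_adj, Set.mem_union, Set.mem_sdiff,
    Set.mem_insert_iff, Set.mem_singleton_iff, mem_edgeSet, Sym2.eq_iff]
  grind [Adj.ne]

lemma neighborSet_twoSwitch_of_ne {v : V} (hi : v ≠ i) (hj : v ≠ j) (hk : v ≠ k) (hl : v ≠ l) :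
    (G.twoSwitch i j k l).neighborSet v = G.neighborSet v := by
  ext w
  simp only [twoSwitch, mem_neighborSet, fromEdgeSet_adj, Set.mem_union, Set.mem_sdiff,
    Set.mem_insert_iff, Set.mem_singleton_iff, mem_edgeSet, Sym2.eq_iff]
  grind [Adj.ne]

lemma ncard_neighborSet_twoSwitch_left (hij : i ≠ j) (hil : i ≠ l) (hik : G.Adj i k)
    (hnij : ¬G.Adj i j) :
    ((G.twoSwitch i j k l).neighborSet i).ncard = (G.neighborSet i).ncard := by
  rw [neighborSet_twoSwitch_left hij hik.ne hil]
  exact Set.ncard_exchange (s := G.neighborSet i) hnij hik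

-- The symmetries `twoSwitch_swap` and `twoSwitch_rotate` carry each endpoint of the switch to
-- the first position, so the computation at `i` covers all four.
lemma ncard_neighborSet_twoSwitch (hij : i ≠ j) (hkl : k ≠ l) (hik : G.Adj i k)
    (hjl : G.Adj j l) (hnij : ¬G.Adj i j) (hnkl : ¬G.Adj k l) (v : V) :
    ((G.twoSwitch i j k l).neighborSet v).ncard = (G.neighborSet v).ncard := by
  have hil : i ≠ l := by rintro rfl; exact hnij hjl.symm
  have hjk : j ≠ k := by rintro rfl; exact hnij hik
  by_cases hvi : v = i
  · subst hvi
    exact ncard_neighborSet_twoSwitch_left hij hil hik hnij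
  by_cases hvj : v = j
  · subst hvj
    rw [twoSwitch_swap]
    exact ncard_neighborSet_twoSwitch_left hij.symm hjk hjl (hnij ∘ Adj.symm)
  by_cases hvk : v = k
  · subst hvk
    rw [twoSwitch_rotate]
    exact ncard_neighborSet_twoSwitch_left hkl hjk.symm hik.symm hnkl
  by_cases hvl : v = l
  · subst hvl
    rw [twoSwitch_rotate, twoSwitch_swap]
    exact ncard_neighborSet_twoSwitch_left hkl.symm hil.symm hjl.symm (hnkl ∘ Adj.symm)
  rw [neighborSet_twoSwitch_of_ne hvi hvj hvk hvl]

def starGraphOn (x : V) (s : Set V) : SimpleGraph V :=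
  fromRel fun v w => v = x ∧ w ∈ s

variable (G) in
lemma exists_neighborSet_eq_empty_sup_starGraphOn (x : V) :
    ∃ G' : SimpleGraph V, G'.neighborSet x = ∅ ∧ G' ⊔ starGraphOn x (G.neighborSet x) = G := by
  refine ⟨G.deleteIncidenceSet x, ?_, ?_⟩
  · ext w
    simp [deleteIncidenceSet_adj]
  · ext v w
    simp only [sup_adj, deleteIncidenceSet_adj, starGraphOn, fromRel_adj, mem_neighborSet]
    grind [Adj.ne, Adj.symm]

section starGraphOn

variable {x v : V} {s : Set V}

lemma neighborSet_sup_starGraphOn_self (hx : G.neighborSet x = ∅) (hxs : x ∉ s) :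
    (G ⊔ starGraphOn x s).neighborSet x = s := by
  ext w
  have hw : ¬G.Adj x w := fun h => hx.subset h
  simp only [mem_neighborSet, sup_adj, starGraphOn, fromRel_adj]
  grind

lemma neighborSet_sup_starGraphOn_of_mem (hxs : x ∉ s) (hv : v ∈ s) :
    (G ⊔ starGraphOn x s).neighborSet v = insert x (G.neighborSet v) := by
  ext w
  simp only [mem_neighborSet, sup_adj, starGraphOn, fromRel_adj, Set.mem_insert_iff]
  grind [Adj.ne]

lemma neighborSet_sup_starGraphOn_of_notMem (hvx : v ≠ x) (hvs : v ∉ s) :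
    (G ⊔ starGraphOn x s).neighborSet v = G.neighborSet v := by
  ext w
  simp only [mem_neighborSet, sup_adj, starGraphOn, fromRel_adj]
  grind

lemma ncard_neighborSet_sup_starGraphOn_of_mem [Finite V]
    (hx : G.neighborSet x = ∅) (hxs : x ∉ s) (hv : v ∈ s) :
    ((G ⊔ starGraphOn x s).neighborSet v).ncard = (G.neighborSet v).ncard + 1 := by
  have hxv : x ∉ G.neighborSet v := fun h => hx.subset (G.adj_symm h)
  rw [neighborSet_sup_starGraphOn_of_mem hxs hv, Set.ncard_insert_of_notMem hxv]

end starGraphOn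

variable [Finite V]

variable (G) in
lemma exists_adj_not_adj_of_ncard_le (hij : i ≠ j) (hik : G.Adj i k)
    (hnij : ¬G.Adj i j) (hdeg : (G.neighborSet k).ncard ≤ (G.neighborSet j).ncard) :
    ∃ l, G.Adj j l ∧ l ≠ k ∧ ¬G.Adj k l := by
  by_contra! h
  have hsub : insert i (G.neighborSet j \ {k}) ⊆ G.neighborSet k \ {j} := by
    rintro x (rfl | ⟨hjx, hxk⟩)
    · exact ⟨hik.symm, hij⟩
    · exact ⟨h x hjx hxk, hjx.ne.symm⟩
  have hi : i ∉ G.neighborSet j \ {k} := fun hi => hnij hi.1.symm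
  have hle := Set.ncard_le_ncard hsub
  rw [Set.ncard_insert_of_notMem hi] at hle
  by_cases hjk : k ∈ G.neighborSet j
  · have hkj : j ∈ G.neighborSet k := G.adj_symm hjk
    rw [← Set.ncard_sdiff_singleton_add_one hjk, ← Set.ncard_sdiff_singleton_add_one hkj] at hdeg
    omega
  · have hkj : j ∉ G.neighborSet k := fun h => hjk (G.adj_symm h)
    rw [Set.sdiff_singleton_eq_self hjk, Set.sdiff_singleton_eq_self hkj] at hle
    omega

lemma exists_degree_preserving_ncard_sdiff_neighborSet_lt {s : Set V} (his : i ∉ s)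
    (hcard : s.ncard = (G.neighborSet i).ncard)
    (hmax : ∀ j ∈ s, ∀ k ∉ s, k ≠ i → (G.neighborSet k).ncard ≤ (G.neighborSet j).ncard)
    (hs : G.neighborSet i ≠ s) :
    ∃ H : SimpleGraph V, (∀ v, (H.neighborSet v).ncard = (G.neighborSet v).ncard) ∧
      (s \ H.neighborSet i).ncard < (s \ G.neighborSet i).ncard := by
  obtain ⟨j, hjs, hnij⟩ : ∃ j ∈ s, ¬G.Adj i j := by
    by_contra! h
    exact hs (Set.eq_of_subset_of_ncard_le h hcard.ge).symm
  obtain ⟨k, hik, hks⟩ : ∃ k, G.Adj i k ∧ k ∉ s := by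
    by_contra! h
    exact hs (Set.eq_of_subset_of_ncard_le h hcard.le)
  have hij : i ≠ j := by rintro rfl; exact his hjs
  obtain ⟨l, hjl, hlk, hnkl⟩ :=
    G.exists_adj_not_adj_of_ncard_le hij hik hnij (hmax j hjs k hks hik.ne.symm)
  have hil : i ≠ l := by rintro rfl; exact hnij hjl.symm
  refine ⟨G.twoSwitch i j k l, ncard_neighborSet_twoSwitch hij hlk.symm hik hjl hnij hnkl, ?_⟩
  have hsdiff : s \ (G.twoSwitch i j k l).neighborSet i = (s \ G.neighborSet i) \ {j} := by
    rw [neighborSet_twoSwitch_left hij hik.ne hil]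
    ext x
    simp only [Set.mem_sdiff, Set.mem_insert_iff, Set.mem_singleton_iff, mem_neighborSet]
    grind
  rw [hsdiff]
  exact Set.ncard_sdiff_singleton_lt_of_mem ⟨hjs, hnij⟩

theorem exists_degree_preserving_neighborSet_eq {s : Set V} (his : i ∉ s)
    (hcard : s.ncard = (G.neighborSet i).ncard)
    (hmax : ∀ j ∈ s, ∀ k ∉ s, k ≠ i → (G.neighborSet k).ncard ≤ (G.neighborSet j).ncard) :
    ∃ H : SimpleGraph V, (∀ v, (H.neighborSet v).ncard = (G.neighborSet v).ncard) ∧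
      H.neighborSet i = s := by
  induction hm : (s \ G.neighborSet i).ncard using Nat.strong_induction_on generalizing G with
  | _ m ih =>
  by_cases hs : G.neighborSet i = s
  · exact ⟨G, fun _ => rfl, hs⟩
  obtain ⟨H, hH, hlt⟩ := exists_degree_preserving_ncard_sdiff_neighborSet_lt his hcard hmax hs
  obtain ⟨H', hH', hH'i⟩ := ih _ (hm ▸ hlt) (by rwa [hH]) (by simpa only [hH]) rfl
  exact ⟨H', fun v => (hH' v).trans (hH v), hH'i⟩

end SimpleGraph

theorem stmt7_general {n : ℕ} (d : Fin n → ℤ) (i : Fin n)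
    (S : Finset (Fin n)) (hiS : i ∉ S)
    (hcard : (S.card : ℤ) = d i)
    (hmax : ∀ j ∈ S, ∀ k, k ∉ S → k ≠ i → d k ≤ d j) :
    GraphicalZ d ↔
      GraphicalZ (fun j => if j = i then 0 else if j ∈ S then d j - 1 else d j) := by
  constructor
  · rintro ⟨G, hG⟩
    obtain ⟨H, hHG, hHi⟩ := G.exists_degree_preserving_neighborSet_eq (s := S) hiS
      (by rw [Set.ncard_coe_finset]; exact_mod_cast hcard.trans (hG i).symm)
      (fun j hj k hk hki => by
        exact_mod_cast (hG k).trans_le ((hmax j hj k hk hki).trans_eq (hG j).symm))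
    obtain ⟨G', hG'i, hG'H⟩ := H.exists_neighborSet_eq_empty_sup_starGraphOn i
    rw [hHi] at hG'H
    subst hG'H
    refine ⟨G', fun v => ?_⟩
    beta_reduce
    split_ifs with hvi hvS
    · rw [hvi, hG'i, Set.ncard_empty, Nat.cast_zero]
    · rw [← hG v, ← hHG v, SimpleGraph.ncard_neighborSet_sup_starGraphOn_of_mem hG'i hiS hvS]
      push_cast
      ring
    · rw [← hG v, ← hHG v, SimpleGraph.neighborSet_sup_starGraphOn_of_notMem hvi hvS]
  · rintro ⟨G, hG⟩
    have hGi : G.neighborSet i = ∅ :=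
      (Set.ncard_eq_zero (s := G.neighborSet i)).mp (by simpa using hG i)
    refine ⟨G ⊔ SimpleGraph.starGraphOn i S, fun v => ?_⟩
    have hv := hG v
    beta_reduce at hv
    split_ifs at hv with hvi hvS
    · rw [hvi, SimpleGraph.neighborSet_sup_starGraphOn_self hGi hiS, Set.ncard_coe_finset, hcard]
    · rw [SimpleGraph.ncard_neighborSet_sup_starGraphOn_of_mem hGi hiS hvS]
      push_cast
      omega
    · rw [SimpleGraph.neighborSet_sup_starGraphOn_of_notMem hvi hvS, hv]

/-- Generalized Havel–Hakimi step with arbitrary hub: let `i` be any index with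
`d i = Δ > 0`, and let `S` be a set of `Δ` vertices other than `i` of largest
degree (ties broken arbitrarily). Then `d` is graphical iff the sequence obtained
by zeroing the hub degree and decrementing the degrees of the vertices of `S` is
graphical. -/
theorem stmt7 {n : ℕ} (d : Fin n → ℤ) (hnn : ∀ j, 0 ≤ d j) (i : Fin n)
    (hpos : 0 < d i) (S : Finset (Fin n)) (hiS : i ∉ S)
    (hcard : (S.card : ℤ) = d i)
    (hmax : ∀ j ∈ S, ∀ k, k ∉ S → k ≠ i → d k ≤ d j) :
    GraphicalZ d ↔
      GraphicalZ (fun j => if j = i then 0 else if j ∈ S then d j - 1 else d j) :=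
  stmt7_general d i S hiS hcard hmax
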